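/- Consider a K-armed bandit on a probability space (Ω, F, P): for each arm i ∈ {1,…,K} and u ≥ 1 let X_{i,u} : Ω → ℝ be the reward of the u-th pull of arm i, where the family (X_{i,u})_{i,u} is mutually independent, for each fixed i the sequence (X_{i,u})_{u≥1} is identically distributed and integrable with mean μ i, and there is a unique arm i* with μ* := μ i* = max_i μ i. Let I : ℕ → Ω → {1,…,K} be a measurable selection process such that for P-almost every ω, the realized selection sequence t ↦ I t (ω) obeys the UCB1 rule with constant C = 2 applied to the realized reward sequences u ↦ X_{i,u}(ω). Then the average collected reward converges to the optimal mean almost surely: (1/n) ∑_{t=1}^n X_{I t, T (I t) t} → μ* almost surely as n → ∞. -/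

import Mathlib

open Finset Filter

/-- Number of pulls of arm `i` among rounds `1, …, t`. -/
noncomputable def pullCount {K : ℕ} (I : ℕ → Fin K) (i : Fin K) (t : ℕ) : ℕ :=
  ((Finset.Icc 1 t).filter (fun s => I s = i)).card

/-- Empirical mean of arm `i` after round `t` (equal to `0` when the arm was never pulled). -/
noncomputable def empMean {K : ℕ} (x : Fin K → ℕ → ℝ) (I : ℕ → Fin K) (i : Fin K) (t : ℕ) : ℝ :=
  if pullCount I i t = 0 then 0
  else (1 / (pullCount I i t : ℝ)) * ∑ u ∈ Finset.Icc 1 (pullCount I i t), x i u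

/-- The selection sequence `I` obeys the UCB1 rule with constant `C`. -/
def UCB1Rule {K : ℕ} (x : Fin K → ℕ → ℝ) (I : ℕ → Fin K) (C : ℝ) : Prop :=
  ∀ t : ℕ, 1 ≤ t →
    if ∃ i : Fin K, pullCount I i (t - 1) = 0 then pullCount I (I t) (t - 1) = 0
    else ∀ j : Fin K,
      empMean x I j (t - 1) + Real.sqrt (C * Real.log t / (pullCount I j (t - 1) : ℝ))
        ≤ empMean x I (I t) (t - 1)
            + Real.sqrt (C * Real.log t / (pullCount I (I t) (t - 1) : ℝ))


open MeasureTheory ProbabilityTheory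

section Basic

variable {K : ℕ} (I : ℕ → Fin K)

lemma pullCount_zero (i : Fin K) : pullCount I i 0 = 0 := by
  simp [pullCount]

lemma pullCount_succ (i : Fin K) (t : ℕ) :
    pullCount I i (t + 1) = pullCount I i t + if I (t + 1) = i then 1 else 0 := by
  unfold pullCount
  rw [show Finset.Icc 1 (t+1) = insert (t+1) (Finset.Icc 1 t) by
    rw [← Finset.insert_Icc_right_eq_Icc_add_one (by omega)]]
  rw [Finset.filter_insert]
  split_ifs with h
  · rw [Finset.card_insert_of_notMem (by simp), add_comm]
  · simp

lemma pullCount_mono (i : Fin K) : Monotone (pullCount I i) := by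
  intro s t hst
  exact Finset.card_le_card (Finset.filter_subset_filter _ (Finset.Icc_subset_Icc_right hst))

lemma pullCount_le (i : Fin K) (t : ℕ) : pullCount I i t ≤ t := by
  calc pullCount I i t ≤ (Finset.Icc 1 t).card := Finset.card_filter_le _ _
  _ = t := by rw [Nat.card_Icc]; omega

lemma sum_pullCount (t : ℕ) : ∑ i : Fin K, pullCount I i t = t := by
  induction t with
  | zero => simp [pullCount]
  | succ n ih =>
    simp only [pullCount_succ, Finset.sum_add_distrib, ih]
    rw [Finset.sum_ite_eq Finset.univ (I (n+1)) (fun _ => 1)]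
    simp

lemma exists_round {i : Fin K} {c T : ℕ} (hc : 1 ≤ c) (h : c ≤ pullCount I i T) :
    ∃ t, 1 ≤ t ∧ t ≤ T ∧ c ≤ t ∧ I t = i ∧
      pullCount I i (t - 1) = c - 1 ∧ pullCount I i t = c := by
  have hex : ∃ t, c ≤ pullCount I i t := ⟨T, h⟩
  classical
  let t := Nat.find hex
  have ht : c ≤ pullCount I i t := Nat.find_spec hex
  have ht1 : 1 ≤ t := by
    rcases Nat.eq_zero_or_pos t with h0 | h1
    · exfalso; rw [h0, pullCount_zero] at ht; omega
    · exact h1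
  have hprev : pullCount I i (t - 1) < c := by
    have := Nat.find_min hex (m := t - 1) (by omega)
    omega
  have hstep : pullCount I i t ≤ pullCount I i (t - 1) + 1 := by
    have := pullCount_succ I i (t - 1)
    rw [show t - 1 + 1 = t by omega] at this
    split_ifs at this <;> omega
  have heq : pullCount I i t = c := by omega
  have hit : I t = i := by
    by_contra hne
    have := pullCount_succ I i (t - 1)
    rw [show t - 1 + 1 = t by omega, if_neg hne] at this
    omega
  refine ⟨t, ht1, Nat.find_le h, le_trans heq.symm.le (pullCount_le I i t), hit, by omega, heq⟩

end Basic

section Decomp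

variable {K : ℕ} (x : Fin K → ℕ → ℝ) (I : ℕ → Fin K)

lemma reward_decomp (n : ℕ) :
    ∑ t ∈ Finset.Icc 1 n, x (I t) (pullCount I (I t) t)
      = ∑ i : Fin K, ∑ u ∈ Finset.Icc 1 (pullCount I i n), x i u := by
  induction n with
  | zero => simp [pullCount]
  | succ n ih =>
    rw [show Finset.Icc 1 (n+1) = insert (n+1) (Finset.Icc 1 n) by
      rw [← Finset.insert_Icc_right_eq_Icc_add_one (by omega)],
      Finset.sum_insert (by simp), ih]
    have key : ∀ i : Fin K,
        ∑ u ∈ Finset.Icc 1 (pullCount I i (n+1)), x i u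
          = (∑ u ∈ Finset.Icc 1 (pullCount I i n), x i u)
            + if i = I (n+1) then x (I (n+1)) (pullCount I (I (n+1)) (n+1)) else 0 := by
      intro i
      by_cases h : I (n+1) = i
      · subst h
        rw [pullCount_succ, if_pos rfl, if_pos rfl]
        rw [show Finset.Icc 1 (pullCount I (I (n+1)) n + 1)
            = insert (pullCount I (I (n+1)) n + 1) (Finset.Icc 1 (pullCount I (I (n+1)) n)) by
          rw [← Finset.insert_Icc_right_eq_Icc_add_one (by omega)],
          Finset.sum_insert (by simp)]
        ring
      · rw [pullCount_succ, if_neg h, if_neg (fun hh => h hh.symm)]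
        simp
    rw [Finset.sum_congr rfl (fun i _ => key i), Finset.sum_add_distrib,
      Finset.sum_ite_eq' Finset.univ (I (n+1))
        (fun _ => x (I (n+1)) (pullCount I (I (n+1)) (n+1)))]
    simp [add_comm]

end Decomp

section AllPulled

variable {K : ℕ} {x : Fin K → ℕ → ℝ} {I : ℕ → Fin K} {C : ℝ}

lemma all_pulled (hU : UCB1Rule x I C) {t : ℕ} (ht : K ≤ t) (i : Fin K) :
    1 ≤ pullCount I i t := by
  classical
  -- Z s = set of arms not yet pulled at time s
  set Z : ℕ → Finset (Fin K) := fun s => Finset.univ.filter (fun j => pullCount I j s = 0)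
    with hZ
  have hZmono : ∀ s u : ℕ, s ≤ u → Z u ⊆ Z s := by
    intro s u hsu j hj
    simp only [hZ, Finset.mem_filter, Finset.mem_univ, true_and] at hj ⊢
    have := pullCount_mono I j hsu
    omega
  have key : ∀ s : ℕ, (Z s).Nonempty → (Z s).card + s ≤ K := by
    intro s
    induction s with
    | zero =>
      intro _
      have h1 : (Z 0).card ≤ (Finset.univ : Finset (Fin K)).card :=
        Finset.card_le_card (Finset.filter_subset (fun j => pullCount I j 0 = 0) _)
      simpa using h1
    | succ n ihn =>
      intro hne
      have hZn : (Z n).Nonempty := hne.mono (hZmono n (n+1) (by omega))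
      have hzero : ∃ j : Fin K, pullCount I j n = 0 := by
        obtain ⟨j, hj⟩ := hZn
        exact ⟨j, by simpa [hZ] using hj⟩
      have hrule := hU (n+1) (by omega)
      rw [show n + 1 - 1 = n from rfl, if_pos hzero] at hrule
      have hmemZn : I (n+1) ∈ Z n := by simp [hZ, hrule]
      have hnot : I (n+1) ∉ Z (n+1) := by
        simp only [hZ, Finset.mem_filter, Finset.mem_univ, true_and]
        rw [pullCount_succ, if_pos rfl]
        omega
      have hssub : Z (n+1) ⊂ Z n :=
        ⟨hZmono n (n+1) (by omega), fun hsub => hnot (hsub hmemZn)⟩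
      have := Finset.card_lt_card hssub
      have := ihn hZn
      omega
  by_contra hcon
  have hiZ : i ∈ Z t := by
    simp only [hZ, Finset.mem_filter, Finset.mem_univ, true_and]; omega
  have := key t ⟨i, hiZ⟩
  have : 1 ≤ (Z t).card := Finset.card_pos.mpr ⟨i, hiZ⟩
  have := key t ⟨i, hiZ⟩
  omega

end AllPulled

section Bounded

variable {K : ℕ} {x : Fin K → ℕ → ℝ} {I : ℕ → Fin K} {μ : Fin K → ℝ}

lemma emp_bounded
    (ha : ∀ i, Filter.Tendsto (fun m : ℕ => (1/(m:ℝ)) * ∑ u ∈ Finset.Icc 1 m, x i u)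
      atTop (nhds (μ i))) :
    ∃ M : ℝ, 0 < M ∧ ∀ (i : Fin K) (t : ℕ), |empMean x I i t| ≤ M := by
  classical
  have hbd : ∀ i : Fin K, ∃ Mi : ℝ, ∀ m : ℕ,
      |(1/(m:ℝ)) * ∑ u ∈ Finset.Icc 1 m, x i u| ≤ Mi := by
    intro i
    have h1 : Filter.Tendsto (fun m : ℕ => |(1/(m:ℝ)) * ∑ u ∈ Finset.Icc 1 m, x i u|)
        atTop (nhds |μ i|) := (ha i).abs
    obtain ⟨Mi, hMi⟩ := h1.bddAbove_range
    exact ⟨Mi, fun m => hMi (Set.mem_range_self m)⟩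
  choose Mf hMf using hbd
  refine ⟨1 + ∑ j : Fin K, |Mf j|, by positivity, fun i t => ?_⟩
  have hMile : |Mf i| ≤ ∑ j : Fin K, |Mf j| :=
    Finset.single_le_sum (fun j _ => abs_nonneg (Mf j)) (Finset.mem_univ i)
  unfold empMean
  split_ifs with h
  · simp only [abs_zero]; positivity
  · have := hMf i (pullCount I i t)
    have h2 : Mf i ≤ |Mf i| := le_abs_self _
    linarith

end Bounded

section IIO

variable {K : ℕ} {x : Fin K → ℕ → ℝ} {I : ℕ → Fin K} {μ : Fin K → ℝ}

set_option maxHeartbeats 1000000 in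
lemma pullCount_tendsto_atTop (hK : 2 ≤ K) (hU : UCB1Rule x I 2)
    (ha : ∀ i, Filter.Tendsto (fun m : ℕ => (1/(m:ℝ)) * ∑ u ∈ Finset.Icc 1 m, x i u)
      atTop (nhds (μ i)))
    (i : Fin K) : Filter.Tendsto (fun t => pullCount I i t) atTop atTop := by
  classical
  obtain ⟨M, hM0, hM⟩ := emp_bounded (I := I) ha
  apply tendsto_atTop_atTop_of_monotone (pullCount_mono I i)
  by_contra hcon
  push_neg at hcon
  obtain ⟨b, hb⟩ := hcon
  have hrange : BddAbove (Set.range (pullCount I i)) :=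
    ⟨b, by rintro _ ⟨t, rfl⟩; exact (hb t).le⟩
  set v := sSup (Set.range (pullCount I i)) with hv
  obtain ⟨t2, ht2⟩ := Nat.sSup_mem (Set.range_nonempty _) hrange
  have hle : ∀ t, pullCount I i t ≤ v := fun t => le_csSup hrange ⟨t, rfl⟩
  have hconst : ∀ t, t2 ≤ t → pullCount I i t = v := fun t h =>
    le_antisymm (hle t) (by rw [hv, ← ht2]; exact pullCount_mono I i h)
  set t3 := max t2 K with ht3
  have hv1 : 1 ≤ v := by
    have h1 := all_pulled hU (le_max_right t2 K) i
    rw [hconst t3 (le_max_left _ _)] at h1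
    exact h1
  -- some arm has unbounded pull count
  have hexj : ∃ j : Fin K, ∀ b' : ℕ, ∃ t, b' ≤ pullCount I j t := by
    by_contra hc
    push_neg at hc
    choose bf hbf using hc
    have hlt : ∀ t : ℕ, t < ∑ j : Fin K, bf j := fun t => by
      calc t = ∑ j : Fin K, pullCount I j t := (sum_pullCount I t).symm
      _ < ∑ j : Fin K, bf j := Finset.sum_lt_sum_of_nonempty
          ⟨⟨0, by omega⟩, Finset.mem_univ _⟩ (fun j _ => hbf j t)
    exact absurd (hlt (∑ j : Fin K, bf j)) (lt_irrefl _)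
  obtain ⟨j, hj⟩ := hexj
  -- choose a threshold where log is large
  have hlogN : ∃ N0 : ℕ, 8 * v * M^2 < Real.log N0 := by
    have h1 : Filter.Tendsto (fun n : ℕ => Real.log n) atTop atTop :=
      Real.tendsto_log_atTop.comp tendsto_natCast_atTop_atTop
    exact (h1.eventually_gt_atTop (8 * v * M^2)).exists
  obtain ⟨N0, hN0⟩ := hlogN
  set c := max (max (4*v+1) (t3+2)) N0 with hc
  have hc4v : 4*v + 1 ≤ c := le_trans (le_max_left _ _) (le_max_left _ _)
  have hct3 : t3 + 2 ≤ c := le_trans (le_max_right _ _) (le_max_left _ _)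
  have hcN0 : N0 ≤ c := le_max_right _ _
  obtain ⟨T, hT⟩ := hj c
  obtain ⟨t, ht1, htT, hct, hIt, hprev, _⟩ := exists_round I (by omega) hT
  have hKt : K ≤ t - 1 := by
    have : K ≤ t3 := le_max_right _ _
    omega
  have hall : ∀ k : Fin K, 1 ≤ pullCount I k (t-1) :=
    fun k => all_pulled hU hKt k
  have hrule := hU t ht1
  rw [if_neg (by push_neg; intro k; have := hall k; omega)] at hrule
  have hineq := hrule i
  rw [hIt] at hineq
  have hpci : pullCount I i (t-1) = v := hconst _ (by omega)
  rw [hpci, hprev] at hineq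
  -- now pure real arithmetic
  set L := Real.log t with hL
  have hL0 : 0 ≤ L := Real.log_nonneg (by exact_mod_cast ht1)
  have hv0 : (0:ℝ) < v := by exact_mod_cast hv1
  have hcast : ((c - 1 : ℕ) : ℝ) = (c:ℝ) - 1 := by
    have : 1 ≤ c := by omega
    push_cast [Nat.cast_sub this]
    ring
  have hc1pos : (0:ℝ) < 4*(v:ℝ) := by positivity
  have hc1ge : 4*(v:ℝ) ≤ ((c - 1 : ℕ) : ℝ) := by
    rw [hcast]
    have : (4*v + 1 : ℕ) ≤ (c:ℕ) := hc4v
    have h2 : ((4*v + 1 : ℕ):ℝ) ≤ (c:ℝ) := by exact_mod_cast this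
    push_cast at h2
    linarith
  have hsq1 : Real.sqrt (2 * L / ((c - 1 : ℕ) : ℝ)) ≤ Real.sqrt (2 * L / (4*(v:ℝ))) :=
    Real.sqrt_le_sqrt (div_le_div_of_nonneg_left (by linarith) hc1pos hc1ge)
  have hsq2 : Real.sqrt (2 * L / (4*(v:ℝ))) = Real.sqrt (2 * L / (v:ℝ)) / 2 := by
    rw [show 2 * L / (4*(v:ℝ)) = (2 * L / (v:ℝ)) / 4 by rw [div_div]; congr 1; ring]
    rw [Real.sqrt_div (by positivity) 4]
    norm_num [show Real.sqrt 4 = 2 by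
      rw [show (4:ℝ) = 2^2 by norm_num, Real.sqrt_sq (by norm_num)]]
  set s := Real.sqrt (2 * L / (v:ℝ)) with hs
  have hAB : empMean x I i (t-1) + s ≤ empMean x I (j) (t-1) + s/2 := by
    calc empMean x I i (t-1) + s ≤ empMean x I j (t-1) + Real.sqrt (2 * L / ((c-1:ℕ):ℝ)) := hineq
    _ ≤ empMean x I j (t-1) + s/2 := by rw [← hsq2]; linarith
  have hMi := abs_le.1 (hM i (t-1))
  have hMj := abs_le.1 (hM j (t-1))
  have hs4M : s ≤ 4 * M := by linarith
  have hs0 : 0 ≤ s := Real.sqrt_nonneg _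
  have hssq : s^2 = 2 * L / (v:ℝ) := Real.sq_sqrt (by positivity)
  have hs2 : 2 * L / (v:ℝ) ≤ 16 * M^2 := by
    rw [← hssq]
    nlinarith
  have hLle : L ≤ 8 * (v:ℝ) * M^2 := by
    rw [div_le_iff₀ hv0] at hs2
    nlinarith
  -- but log t ≥ log N0 > 8 v M²
  have hN0pos : (0:ℝ) < (N0:ℝ) := by
    by_contra hc0
    push_neg at hc0
    have : (N0:ℕ) = 0 := by exact_mod_cast le_antisymm (by exact_mod_cast hc0) (Nat.zero_le _)
    rw [this] at hN0
    simp at hN0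
    nlinarith
  have hN0t : (N0:ℝ) ≤ (t:ℝ) := by exact_mod_cast le_trans hcN0 hct
  have hlogle : Real.log N0 ≤ L := Real.log_le_log hN0pos hN0t
  have : (8:ℝ) * v * M^2 < 8 * v * M^2 := by
    calc (8:ℝ) * v * M^2 < Real.log N0 := hN0
    _ ≤ L := hlogle
    _ ≤ 8 * (v:ℝ) * M^2 := hLle
  exact absurd this (lt_irrefl _)

end IIO

section Subopt

variable {K : ℕ} {x : Fin K → ℕ → ℝ} {I : ℕ → Fin K} {μ : Fin K → ℝ}

lemma empMean_tendsto (hK : 2 ≤ K) (hU : UCB1Rule x I 2)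
    (ha : ∀ i, Filter.Tendsto (fun m : ℕ => (1/(m:ℝ)) * ∑ u ∈ Finset.Icc 1 m, x i u)
      atTop (nhds (μ i)))
    (i : Fin K) : Filter.Tendsto (fun t => empMean x I i t) atTop (nhds (μ i)) := by
  have hpc := pullCount_tendsto_atTop hK hU ha i
  have h1 : Filter.Tendsto
      (fun t => (1/((pullCount I i t : ℕ):ℝ)) * ∑ u ∈ Finset.Icc 1 (pullCount I i t), x i u)
      atTop (nhds (μ i)) := (ha i).comp hpc
  apply h1.congr'
  filter_upwards [hpc.eventually_ge_atTop 1] with t ht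
  unfold empMean
  rw [if_neg (by omega)]

lemma subopt_frac (hK : 2 ≤ K) (hU : UCB1Rule x I 2)
    (ha : ∀ i, Filter.Tendsto (fun m : ℕ => (1/(m:ℝ)) * ∑ u ∈ Finset.Icc 1 m, x i u)
      atTop (nhds (μ i)))
    {istar : Fin K} {i : Fin K} (hi : i ≠ istar) (hlt : μ i < μ istar) :
    Filter.Tendsto (fun n : ℕ => (pullCount I i n : ℝ)/n) atTop (nhds 0) := by
  have hemp := fun j => empMean_tendsto (I := I) hK hU ha j
  refine tendsto_order.2 ⟨fun a ha' => ?_, fun a ha' => ?_⟩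
  · filter_upwards with n
    have h0 : (0:ℝ) ≤ (pullCount I i n:ℝ)/n := by positivity
    linarith
  · by_contra hcon
    rw [Filter.not_eventually] at hcon
    set Δ := μ istar - μ i with hΔdef
    have hΔ : 0 < Δ := sub_pos.2 hlt
    obtain ⟨Ni, hNi⟩ := Metric.tendsto_atTop.1 (hemp i) (Δ/4) (by linarith)
    obtain ⟨Ns, hNs⟩ := Metric.tendsto_atTop.1 (hemp istar) (Δ/4) (by linarith)
    set t0 := max (max Ni Ns) K with ht0
    -- the sqrt error term tends to 0
    have hdiv : Filter.Tendsto (fun n : ℕ => Real.log n / n) atTop (nhds 0) :=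
      (Real.isLittleO_log_id_atTop.tendsto_div_nhds_zero).comp tendsto_natCast_atTop_atTop
    have hAn : Filter.Tendsto (fun n : ℕ => a * n - 1) atTop atTop :=
      tendsto_atTop_add_const_right _ (-1)
        (Tendsto.const_mul_atTop ha' tendsto_natCast_atTop_atTop)
    have hg : Filter.Tendsto (fun n : ℕ => 2 * Real.log n / (a * n - 1)) atTop (nhds 0) := by
      apply squeeze_zero' (g := fun n : ℕ => (4/a) * (Real.log n / n))
      · filter_upwards [hAn.eventually_ge_atTop 1, eventually_ge_atTop 1] with n h1 h2
        have : (1:ℝ) ≤ (n:ℝ) := by exact_mod_cast h2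
        have hlog : 0 ≤ Real.log n := Real.log_nonneg this
        positivity
      · filter_upwards [hAn.eventually_ge_atTop 1, eventually_ge_atTop 1] with n h1 h2
        have hn1 : (1:ℝ) ≤ (n:ℝ) := by exact_mod_cast h2
        have hlog : 0 ≤ Real.log n := Real.log_nonneg hn1
        have hden : a * n / 2 ≤ a * n - 1 := by
          have : (2:ℝ) ≤ a * n := by linarith
          linarith
        have hden0 : (0:ℝ) < a * n / 2 := by
          have : (2:ℝ) ≤ a * n := by linarith
          linarith
        calc 2 * Real.log n / (a * n - 1) ≤ 2 * Real.log n / (a * n / 2) :=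
              div_le_div_of_nonneg_left (by linarith) hden0 hden
        _ = (4/a) * (Real.log n / n) := by
              field_simp
              ring
      · simpa using hdiv.const_mul (4/a)
    have hsq : Filter.Tendsto (fun n : ℕ => Real.sqrt (2 * Real.log n / (a * n - 1)))
        atTop (nhds 0) := by
      have := hg.sqrt
      simpa using this
    have hev1 : ∀ᶠ n : ℕ in atTop, Real.sqrt (2 * Real.log n / (a * n - 1)) < Δ/4 :=
      hsq.eventually (gt_mem_nhds (show (0:ℝ) < Δ/4 by linarith))
    obtain ⟨N, hN⟩ := eventually_atTop.1
      (hev1.and (hAn.eventually_ge_atTop ((t0:ℝ) + 1)))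
    obtain ⟨n, hnN, hn⟩ := (frequently_atTop.1 hcon) N
    push_neg at hn
    have hsqn : Real.sqrt (2 * Real.log n / (a * n - 1)) < Δ/4 := (hN n hnN).1
    have hant0 : (t0:ℝ) + 1 ≤ a * n - 1 := (hN n hnN).2
    -- n ≥ 1 and pull count at least a*n
    have hn0 : (0:ℝ) < n := by
      by_contra h0
      push_neg at h0
      have : n = 0 := by exact_mod_cast le_antisymm (by exact_mod_cast h0) (Nat.zero_le _)
      rw [this] at hn
      simp [pullCount_zero] at hn
      linarith
    have hpcn : a * n ≤ (pullCount I i n : ℝ) := by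
      rw [le_div_iff₀ hn0] at hn
      linarith [hn]
    set c := pullCount I i n with hcdef
    have hc1 : 1 ≤ c := by
      by_contra hc0
      push_neg at hc0
      interval_cases c
      · simp at hpcn
        nlinarith
    obtain ⟨t, ht1, htn, hct, hIt, hprev, _⟩ := exists_round I hc1 (le_refl c)
    have htt0 : t0 + 2 ≤ t := by
      have h1 : (t0:ℝ) + 2 ≤ (c:ℝ) := by linarith
      have h2 : (c:ℝ) ≤ (t:ℝ) := by exact_mod_cast hct
      exact_mod_cast le_trans h1 h2
    have hKt : K ≤ t - 1 := by
      have : K ≤ t0 := le_max_right _ _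
      omega
    have hall : ∀ k : Fin K, 1 ≤ pullCount I k (t-1) := fun k => all_pulled hU hKt k
    have hrule := hU t ht1
    rw [if_neg (by push_neg; intro k; have := hall k; omega)] at hrule
    have hineq := hrule istar
    rw [hIt, hprev] at hineq
    -- bounds on empirical means at time t-1
    have htNi : Ni ≤ t - 1 := by
      have : Ni ≤ t0 := le_trans (le_max_left _ _) (le_max_left _ _)
      omega
    have htNs : Ns ≤ t - 1 := by
      have : Ns ≤ t0 := le_trans (le_max_right _ _) (le_max_left _ _)
      omega
    have hei := hNi (t-1) htNi
    have hes := hNs (t-1) htNs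
    rw [Real.dist_eq] at hei hes
    have hei' := abs_lt.1 hei
    have hes' := abs_lt.1 hes
    -- bound the sqrt term at round t
    have hcast : ((c - 1 : ℕ) : ℝ) = (c:ℝ) - 1 := by
      have : (1:ℕ) ≤ c := hc1
      push_cast [Nat.cast_sub this]
      ring
    have hden1 : (0:ℝ) < a * n - 1 := by
      have : (0:ℝ) ≤ (t0:ℝ) := Nat.cast_nonneg _
      linarith
    have hden2 : a * n - 1 ≤ ((c - 1 : ℕ):ℝ) := by
      rw [hcast]; linarith
    have ht1r : (1:ℝ) ≤ (t:ℝ) := by exact_mod_cast ht1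
    have hlogt : Real.log t ≤ Real.log n :=
      Real.log_le_log (by linarith) (by exact_mod_cast htn)
    have hn1r : (1:ℝ) ≤ (n:ℝ) := by
      have hne : n ≠ 0 := by intro h0; rw [h0] at hn0; simp at hn0
      exact_mod_cast Nat.one_le_iff_ne_zero.2 hne
    have hlogn0 : 0 ≤ Real.log n := Real.log_nonneg hn1r
    have hfrac : 2 * Real.log t / ((c - 1 : ℕ):ℝ) ≤ 2 * Real.log n / (a * n - 1) :=
      div_le_div₀ (by linarith) (by linarith) hden1 hden2
    have hsqrt_le : Real.sqrt (2 * Real.log t / ((c - 1 : ℕ):ℝ)) < Δ/4 :=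
      lt_of_le_of_lt (Real.sqrt_le_sqrt hfrac) hsqn
    have hsq0 : 0 ≤ Real.sqrt (2 * Real.log t / ((pullCount I istar (t-1) : ℕ):ℝ)) :=
      Real.sqrt_nonneg _
    -- put everything together
    have : μ istar - Δ/4 < μ i + Δ/4 + Δ/4 := by
      calc μ istar - Δ/4 < empMean x I istar (t-1) := by linarith [hes'.1]
      _ ≤ empMean x I istar (t-1)
          + Real.sqrt (2 * Real.log t / ((pullCount I istar (t-1) : ℕ):ℝ)) := by linarith
      _ ≤ empMean x I i (t-1) + Real.sqrt (2 * Real.log t / ((c - 1 : ℕ):ℝ)) := hineq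
      _ < (μ i + Δ/4) + Δ/4 := by
          have := hei'.2
          linarith
    rw [hΔdef] at this
    linarith

end Subopt

section Master

variable {K : ℕ} {x : Fin K → ℕ → ℝ} {I : ℕ → Fin K} {μ : Fin K → ℝ}

lemma det_main (hK : 2 ≤ K) (hU : UCB1Rule x I 2)
    (ha : ∀ i, Filter.Tendsto (fun m : ℕ => (1/(m:ℝ)) * ∑ u ∈ Finset.Icc 1 m, x i u)
      atTop (nhds (μ i)))
    (istar : Fin K) (huniq : ∀ i : Fin K, i ≠ istar → μ i < μ istar) :
    Filter.Tendsto (fun n : ℕ => (1/(n:ℝ)) * ∑ t ∈ Finset.Icc 1 n, x (I t) (pullCount I (I t) t))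
      atTop (nhds (μ istar)) := by
  classical
  have hid : ∀ n : ℕ, (1/(n:ℝ)) * ∑ t ∈ Finset.Icc 1 n, x (I t) (pullCount I (I t) t)
      = ∑ i : Fin K, ((pullCount I i n : ℝ)/n) * empMean x I i n := by
    intro n
    rw [reward_decomp, Finset.mul_sum]
    refine Finset.sum_congr rfl fun i _ => ?_
    unfold empMean
    split_ifs with h
    · rw [h]; simp
    · have hpc0 : ((pullCount I i n : ℕ):ℝ) ≠ 0 := Nat.cast_ne_zero.2 h
      field_simp
  have hterm : ∀ i : Fin K,
      Filter.Tendsto (fun n : ℕ => ((pullCount I i n : ℝ)/n) * empMean x I i n)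
        atTop (nhds (if i = istar then μ istar else 0)) := by
    intro i
    by_cases hii : i = istar
    · subst hii
      rw [if_pos rfl]
      have hsum0 : Filter.Tendsto
          (fun n : ℕ => ∑ j ∈ Finset.univ.erase i, (pullCount I j n:ℝ)/n)
          atTop (nhds 0) := by
        have h1 := tendsto_finset_sum (Finset.univ.erase i) (fun j hj =>
          subopt_frac (I := I) hK hU ha (Finset.ne_of_mem_erase hj)
            (huniq j (Finset.ne_of_mem_erase hj)))
        simpa using h1
      have hone : ∀ᶠ n : ℕ in atTop, (pullCount I i n:ℝ)/n
          = 1 - ∑ j ∈ Finset.univ.erase i, (pullCount I j n:ℝ)/n := by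
        filter_upwards [eventually_ge_atTop 1] with n hn
        have hn0 : (n:ℝ) ≠ 0 := by
          have : (1:ℝ) ≤ (n:ℝ) := by exact_mod_cast hn
          linarith
        have hcast : (pullCount I i n : ℝ) + ∑ j ∈ Finset.univ.erase i, (pullCount I j n:ℝ)
            = (n:ℝ) := by
          exact_mod_cast congrArg (Nat.cast : ℕ → ℝ)
            ((Finset.add_sum_erase Finset.univ (fun j => pullCount I j n)
              (Finset.mem_univ i)).trans (sum_pullCount I n))
        rw [← Finset.sum_div, eq_sub_iff_add_eq, ← add_div, hcast, div_self hn0]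
      have h2 : Filter.Tendsto
          (fun n : ℕ => 1 - ∑ j ∈ Finset.univ.erase i, (pullCount I j n:ℝ)/n)
          atTop (nhds 1) := by
        have h3 : Filter.Tendsto (fun _ : ℕ => (1:ℝ)) atTop (nhds 1) := tendsto_const_nhds
        have := h3.sub hsum0
        simpa using this
      have hfrac : Filter.Tendsto (fun n : ℕ => (pullCount I i n : ℝ)/n) atTop (nhds 1) :=
        h2.congr' (EventuallyEq.symm hone)
      have := hfrac.mul (empMean_tendsto (I := I) hK hU ha i)
      simpa using this
    · rw [if_neg hii]
      have := (subopt_frac (I := I) hK hU ha hii (huniq i hii)).mul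
        (empMean_tendsto (I := I) hK hU ha i)
      simpa using this
  have hsum := tendsto_finset_sum Finset.univ (fun i (_ : i ∈ Finset.univ) => hterm i)
  have hval : ∑ i : Fin K, (if i = istar then μ istar else 0) = μ istar := by
    rw [Finset.sum_ite_eq' Finset.univ istar (fun _ => μ istar)]
    simp
  rw [hval] at hsum
  exact hsum.congr (fun n => (hid n).symm)

end Master

lemma sum_range_shift (f : ℕ → ℝ) (m : ℕ) :
    ∑ u ∈ Finset.range m, f (u+1) = ∑ u ∈ Finset.Icc 1 m, f u := by
  induction m with
  | zero => simp
  | succ n ih =>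
    rw [Finset.sum_range_succ, ih, show Finset.Icc 1 (n+1) = insert (n+1) (Finset.Icc 1 n) by
      rw [← Finset.insert_Icc_right_eq_Icc_add_one (by omega)], Finset.sum_insert (by simp), add_comm]

open MeasureTheory ProbabilityTheory

theorem ucb1_bandit_average_reward_tendsto_optimal_mean_ae
    {Ω : Type*} [MeasurableSpace Ω] (P : Measure Ω) [IsProbabilityMeasure P]
    {K : ℕ} (hK : 2 ≤ K)
    (X : Fin K → ℕ → Ω → ℝ)
    (hmeas : ∀ (i : Fin K) (u : ℕ), Measurable (X i u))
    (hindep : iIndepFun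
      (fun p : Fin K × ℕ => X p.1 p.2) P)
    (hident : ∀ (i : Fin K) (u : ℕ), IdentDistrib (X i u) (X i 1) P P)
    (hint : ∀ i : Fin K, Integrable (X i 1) P)
    (μ : Fin K → ℝ) (hmean : ∀ i : Fin K, P[X i 1] = μ i)
    (istar : Fin K) (huniq : ∀ i : Fin K, i ≠ istar → μ i < μ istar)
    (I : ℕ → Ω → Fin K) (hImeas : ∀ t : ℕ, Measurable (I t))
    (hUCB : ∀ᵐ ω ∂P, UCB1Rule (fun i u => X i u ω) (fun t => I t ω) 2) :
    ∀ᵐ ω ∂P, Tendsto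
      (fun n : ℕ => (1 / (n : ℝ)) *
        ∑ t ∈ Finset.Icc 1 n, X (I t ω) (pullCount (fun s => I s ω) (I t ω) t) ω)
      atTop (nhds (μ istar)) := by
  have hSL : ∀ i : Fin K, ∀ᵐ ω ∂P, Filter.Tendsto
      (fun m : ℕ => (1/(m:ℝ)) * ∑ u ∈ Finset.Icc 1 m, X i u ω) atTop (nhds (μ i)) := by
    intro i
    have h1 := strong_law_ae_real (fun u => X i (u+1))
      (by simpa using hint i)
      (fun u v huv => hindep.indepFun (show ((i, u+1) : Fin K × ℕ) ≠ (i, v+1) by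
        simp only [ne_eq, Prod.mk.injEq, not_and]
        intro _
        omega))
      (fun u => hident i (u+1))
    have h2 : P[(fun u => X i (u+1)) 0] = μ i := by
      rw [show (fun u => X i (u+1)) 0 = X i 1 from rfl, hmean i]
    rw [h2] at h1
    filter_upwards [h1] with ω hω
    apply hω.congr
    intro m
    rw [← sum_range_shift (fun u => X i u ω) m, one_div, inv_mul_eq_div]
  filter_upwards [ae_all_iff.2 hSL, hUCB] with ω hLLN hU
  exact det_main hK hU (fun i => hLLN i) istar huniq
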